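/- Let n ≥ 1 and let a = (a_1,…,a_n) and b = (b_1,…,b_n) be points of D such that a_i ≤ b_i for all i = 1,…,n. Then the function g : [0,1] → ℝ defined by g(λ) = f(a + λ·(b − a)) is antitone (monotonically decreasing) on [0,1]. -/

import Mathlib

/-- The extension of a point `t ∈ ℝⁿ` (coordinates `t₁,…,tₙ` indexed by `Fin n`,
so that `t i` is `t_{i+1}`) to indices `0,1,…` with the convention `t₀ = 1`
(and value `1` outside `{0,1,…,n}`, which is irrelevant). -/
noncomputable def extCoord (n : ℕ) (t : Fin n → ℝ) (i : ℕ) : ℝ :=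
  if h : 1 ≤ i ∧ i ≤ n then t ⟨i - 1, by omega⟩ else 1

/-- The set `D = {t ∈ ℝⁿ : tᵢ > 0 for all i, and tⱼ² ≤ tⱼ₋₁·tⱼ₊₁ for all
j = 1,…,n−1, with the convention t₀ = 1}`. -/
def Dset (n : ℕ) : Set (Fin n → ℝ) :=
  {t | (∀ i, 0 < t i) ∧
    ∀ j, 1 ≤ j → j ≤ n - 1 → (extCoord n t j) ^ 2 ≤ extCoord n t (j - 1) * extCoord n t (j + 1)}

/-- The function `f(t) = 1/t₁ + t₁/t₂ + ⋯ + t_{n−1}/tₙ = Σ_{j=1}^{n} t_{j−1}/t_j`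
(with the convention `t₀ = 1`). -/
noncomputable def fDP (n : ℕ) (t : Fin n → ℝ) : ℝ :=
  ∑ j ∈ Finset.Icc 1 n, extCoord n t (j - 1) / extCoord n t j


/-! The derivative of `g` at `λ` is the derivative of `f` at `t = a + λ(b − a)` in the direction
`v = b − a ≥ 0`. With `r_j = t_{j−1}/t_j` and `s_j = v_j/t_j` (so `s_0 = 0`), it equals
`∑_{j=1}^n r_j (s_{j−1} − s_j)`. Since `D` is convex, `t ∈ D`, which says exactly that `r_j` is
nonincreasing in `j`; Abel summation then bounds the sum by `−r_n s_n ≤ 0`. -/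

lemma two_mul_mul_le_of_sq_le_mul {x₁ x₂ x₃ y₁ y₂ y₃ : ℝ} (hx₁ : 0 ≤ x₁) (hx₃ : 0 ≤ x₃)
    (hy₁ : 0 ≤ y₁) (hy₃ : 0 ≤ y₃) (hx : x₂ ^ 2 ≤ x₁ * x₃) (hy : y₂ ^ 2 ≤ y₁ * y₃) :
    2 * (x₂ * y₂) ≤ x₁ * y₃ + y₁ * x₃ := by
  -- `(x₂y₂)² ≤ (x₁y₃)(y₁x₃)`, then AM-GM
  have hsq : (x₂ * y₂) ^ 2 ≤ ((x₁ * y₃ + y₁ * x₃) / 2) ^ 2 := by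
    nlinarith [mul_le_mul hx hy (sq_nonneg y₂) (mul_nonneg hx₁ hx₃), sq_nonneg (x₁ * y₃ - y₁ * x₃)]
  nlinarith [abs_le_of_sq_le_sq' hsq (by positivity)]

lemma sq_le_mul_of_segment {x₁ x₂ x₃ y₁ y₂ y₃ l : ℝ} (hl₀ : 0 ≤ l) (hl₁ : l ≤ 1)
    (hx₁ : 0 ≤ x₁) (hx₃ : 0 ≤ x₃) (hy₁ : 0 ≤ y₁) (hy₃ : 0 ≤ y₃)
    (hx : x₂ ^ 2 ≤ x₁ * x₃) (hy : y₂ ^ 2 ≤ y₁ * y₃) :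
    (x₂ + l * (y₂ - x₂)) ^ 2 ≤ (x₁ + l * (y₁ - x₁)) * (x₃ + l * (y₃ - x₃)) := by
  -- RHS − LHS = (1 − l)²(x₁x₃ − x₂²) + l²(y₁y₃ − y₂²) + l(1 − l)(x₁y₃ + y₁x₃ − 2x₂y₂)
  have hcross := two_mul_mul_le_of_sq_le_mul hx₁ hx₃ hy₁ hy₃ hx hy
  have hl : 0 ≤ l * (1 - l) := mul_nonneg hl₀ (by linarith)
  nlinarith [mul_nonneg (sq_nonneg (1 - l)) (sub_nonneg.2 hx),
    mul_nonneg (sq_nonneg l) (sub_nonneg.2 hy), mul_nonneg hl (sub_nonneg.2 hcross)]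

noncomputable def ratioSum (n : ℕ) (T : ℕ → ℝ) : ℝ :=
  ∑ j ∈ Finset.Icc 1 n, T (j - 1) / T j

lemma sum_Icc_mul_sub_le_neg_mul {R S : ℕ → ℝ} (hS : ∀ j, 0 ≤ S j) (hS₀ : S 0 = 0) :
    ∀ n, (∀ j, 1 ≤ j → j + 1 ≤ n → R (j + 1) ≤ R j) →
      ∑ j ∈ Finset.Icc 1 n, R j * (S (j - 1) - S j) ≤ -R n * S n := by
  intro n
  induction n with
  | zero => simp [hS₀]
  | succ n ih =>
    intro hR
    rw [Finset.sum_Icc_succ_top (by omega), Nat.add_sub_cancel]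
    have hsum := ih fun j hj hjn => hR j hj (by omega)
    rcases Nat.eq_zero_or_pos n with rfl | hn
    · simp [hS₀]
    have hRn : R (n + 1) ≤ R n := hR n hn le_rfl
    nlinarith [mul_le_mul_of_nonneg_right hRn (hS n)]

lemma hasDerivAt_affine_div_affine {x u y v l : ℝ} (hx : x + l * u ≠ 0) (hy : y + l * v ≠ 0) :
    HasDerivAt (fun l => (x + l * u) / (y + l * v))
      ((x + l * u) / (y + l * v) * (u / (x + l * u) - v / (y + l * v))) l := by
  have hnum : HasDerivAt (fun l => x + l * u) u l := by
    simpa using ((hasDerivAt_id l).mul_const u).const_add x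
  have hden : HasDerivAt (fun l => y + l * v) v l := by
    simpa using ((hasDerivAt_id l).mul_const v).const_add y
  refine (hnum.div hden hy).congr_deriv ?_
  generalize x + l * u = p at *
  generalize y + l * v = q at *
  field_simp

lemma hasDerivAt_ratioSum_segment (n : ℕ) {A V : ℕ → ℝ} {l : ℝ} (hT : ∀ i, (A + l • V) i ≠ 0) :
    HasDerivAt (fun l => ratioSum n (A + l • V))
      (∑ j ∈ Finset.Icc 1 n, (A + l • V) (j - 1) / (A + l • V) j *
        (V (j - 1) / (A + l • V) (j - 1) - V j / (A + l • V) j)) l := by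
  simp only [ratioSum, Pi.add_apply, Pi.smul_apply, smul_eq_mul]
  exact HasDerivAt.fun_sum fun j _ => hasDerivAt_affine_div_affine (hT _) (hT _)

lemma sum_ratio_mul_sub_nonpos (n : ℕ) {T V : ℕ → ℝ} (hT : ∀ i, 0 < T i) (hV : ∀ i, 0 ≤ V i)
    (hV₀ : V 0 = 0) (hTlc : ∀ j, 1 ≤ j → j + 1 ≤ n → T j ^ 2 ≤ T (j - 1) * T (j + 1)) :
    ∑ j ∈ Finset.Icc 1 n, T (j - 1) / T j * (V (j - 1) / T (j - 1) - V j / T j) ≤ 0 := by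
  have hratio : ∀ j, 1 ≤ j → j + 1 ≤ n → T (j + 1 - 1) / T (j + 1) ≤ T (j - 1) / T j := by
    intro j hj hjn
    rw [Nat.add_sub_cancel, div_le_div_iff₀ (hT _) (hT _)]
    nlinarith [hTlc j hj hjn]
  calc _ ≤ -(T (n - 1) / T n) * (V n / T n) :=
        sum_Icc_mul_sub_le_neg_mul (R := fun j => T (j - 1) / T j) (S := fun j => V j / T j)
          (fun j => div_nonneg (hV j) (hT j).le) (by simp [hV₀]) n hratio
    _ ≤ 0 := by
        have := mul_nonneg (div_pos (hT (n - 1)) (hT n)).le (div_nonneg (hV n) (hT n).le)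
        linarith

theorem antitoneOn_ratioSum_segment (n : ℕ) {A B : ℕ → ℝ} (hA : ∀ i, 0 < A i)
    (hB : ∀ i, 0 < B i) (hAB : ∀ i, A i ≤ B i) (hAB₀ : A 0 = B 0)
    (hAlc : ∀ j, 1 ≤ j → j + 1 ≤ n → A j ^ 2 ≤ A (j - 1) * A (j + 1))
    (hBlc : ∀ j, 1 ≤ j → j + 1 ≤ n → B j ^ 2 ≤ B (j - 1) * B (j + 1)) :
    AntitoneOn (fun l : ℝ => ratioSum n (A + l • (B - A))) (Set.Icc 0 1) := by
  have hpos : ∀ l ∈ Set.Icc (0 : ℝ) 1, ∀ i, 0 < (A + l • (B - A)) i := by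
    rintro l ⟨hl₀, -⟩ i
    simp only [Pi.add_apply, Pi.smul_apply, Pi.sub_apply, smul_eq_mul]
    linarith [mul_nonneg hl₀ (sub_nonneg.2 (hAB i)), hA i]
  have hderiv := fun l (hl : l ∈ Set.Icc (0 : ℝ) 1) =>
    hasDerivAt_ratioSum_segment n fun i => (hpos l hl i).ne'
  apply antitoneOn_of_deriv_nonpos (convex_Icc 0 1)
  · exact fun l hl => (hderiv l hl).continuousAt.continuousWithinAt
  · rw [interior_Icc]
    exact fun l hl => (hderiv l (Set.Ioo_subset_Icc_self hl)).differentiableAt.differentiableWithinAt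
  · rw [interior_Icc]
    intro l hl
    have hl' := Set.Ioo_subset_Icc_self hl
    rw [(hderiv l hl').deriv]
    refine sum_ratio_mul_sub_nonpos n (hpos l hl') (fun i => sub_nonneg.2 (hAB i)) (by simp [hAB₀])
      fun j hj hjn => ?_
    simpa only [Pi.add_apply, Pi.smul_apply, Pi.sub_apply, smul_eq_mul] using
      sq_le_mul_of_segment hl'.1 hl'.2 (hA _).le (hA _).le (hB _).le (hB _).le
        (hAlc j hj hjn) (hBlc j hj hjn)

lemma extCoord_pos {n : ℕ} {t : Fin n → ℝ} (ht : ∀ i, 0 < t i) (i : ℕ) : 0 < extCoord n t i := by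
  unfold extCoord
  split_ifs
  exacts [ht _, one_pos]

lemma extCoord_mono {n : ℕ} {s t : Fin n → ℝ} (hst : ∀ i, s i ≤ t i) (i : ℕ) :
    extCoord n s i ≤ extCoord n t i := by
  unfold extCoord
  split_ifs
  exacts [hst _, le_rfl]

lemma extCoord_zero (n : ℕ) (t : Fin n → ℝ) : extCoord n t 0 = 1 := by
  simp [extCoord]

lemma extCoord_segment (n : ℕ) (a b : Fin n → ℝ) (l : ℝ) :
    extCoord n (a + l • (b - a)) = extCoord n a + l • (extCoord n b - extCoord n a) := by
  funext i
  simp only [extCoord, Pi.add_apply, Pi.smul_apply, Pi.sub_apply, smul_eq_mul]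
  split_ifs <;> ring

lemma extCoord_sq_le_of_mem_Dset {n : ℕ} {t : Fin n → ℝ} (ht : t ∈ Dset n) {j : ℕ} (hj : 1 ≤ j)
    (hjn : j + 1 ≤ n) : extCoord n t j ^ 2 ≤ extCoord n t (j - 1) * extCoord n t (j + 1) :=
  ht.2 j hj (by omega)

theorem stmt5_general (n : ℕ) (a b : Fin n → ℝ)
    (ha : a ∈ Dset n) (hb : b ∈ Dset n) (hab : ∀ i, a i ≤ b i) :
    AntitoneOn (fun l : ℝ => fDP n (a + l • (b - a))) (Set.Icc (0 : ℝ) 1) := by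
  show AntitoneOn (fun l : ℝ => ratioSum n (extCoord n (a + l • (b - a)))) _
  simp only [extCoord_segment]
  exact antitoneOn_ratioSum_segment n (extCoord_pos ha.1) (extCoord_pos hb.1) (extCoord_mono hab)
    (by rw [extCoord_zero, extCoord_zero]) (fun _ => extCoord_sq_le_of_mem_Dset ha)
    (fun _ => extCoord_sq_le_of_mem_Dset hb)

/-- For `n ≥ 1` and points `a, b ∈ D` with `aᵢ ≤ bᵢ` for all `i`, the function
`g(λ) = f(a + λ·(b − a))` is antitone on `[0,1]`. -/
theorem stmt5 (n : ℕ) (hn : 1 ≤ n) (a b : Fin n → ℝ)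
    (ha : a ∈ Dset n) (hb : b ∈ Dset n) (hab : ∀ i, a i ≤ b i) :
    AntitoneOn (fun l : ℝ => fDP n (a + l • (b - a))) (Set.Icc (0 : ℝ) 1) :=
  stmt5_general n a b ha hb hab
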